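/- arXiv:2510.10967 — 3 statements merged into one kernel-verified Lean document; each statement's English description precedes it below -/
import Mathlib

section
/- For every positive integer k and every affine subspace A of 𝔽₂^{2k} of dimension 2k-1, one has |A ∩ R_k| ≤ 2^{2k-2} + 2^{k-1} and |A ∩ S_k| ≤ 2^{2k-2}. -/
/-- The quadratic form `q_k(x) = ∑_{i=1}^k x_i · x_{k+i}` on `𝔽₂^{2k}`. -/
def qForm (k : ℕ) (x : Fin (2 * k) → ZMod 2) : ZMod 2 :=
  ∑ i : Fin k, x ⟨i.1, by have := i.2; omega⟩ * x ⟨k + i.1, by have := i.2; omega⟩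

/-- `S_k = {x ∈ 𝔽₂^{2k} : q_k(x) = 1}`. -/
def Sset (k : ℕ) : Set (Fin (2 * k) → ZMod 2) := {x | qForm k x = 1}

/-- `R_k = {x ∈ 𝔽₂^{2k} : q_k(x) = 0}`. -/
def Rset (k : ℕ) : Set (Fin (2 * k) → ZMod 2) := {x | qForm k x = 0}

/-- `A` is an affine subspace of dimension `d`: a translate `a + W` of a linear
subspace `W` with `dim W = d`. -/
def IsAffineOfDim {V : Type*} [AddCommGroup V] [Module (ZMod 2) V]
    (A : Set V) (d : ℕ) : Prop :=
  ∃ (a : V) (W : Submodule (ZMod 2) V),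
    Module.finrank (ZMod 2) W = d ∧ A = (a + ·) '' (W : Set V)

/-!
An affine hyperplane of `𝔽₂^{2k}` is a level set `{x | c ⬝ᵥ x = b}` with `c ≠ 0`. Write
`x = (u, v)` and `c = (α, β)` in halves, so that `q_k(x) = u ⬝ᵥ v`; as this is symmetric in `u`
and `v` we may assume `β ≠ 0`. For fixed `u`, the points of the hyperplane with `q_k = s` are
`{v | u ⬝ᵥ v = s, β ⬝ᵥ v = b - α ⬝ᵥ u}`. For `u ∉ {0, β}` the two functionals are linearly
independent and this slice has exactly `2^(k-2)` points, for `u = β` it has at most `2^(k-1)`,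
and for `u = 0` it is empty if `s = 1` and has `2^(k-1)` points if `s = 0`. Summing over `u`
gives at most `2^(2k-2)` points, plus `2^(k-1)` when `s = 0`.
-/

open Finset Matrix Function

lemma AddMonoidHom.card_fiber_mul_card_of_surjective {G H : Type*} [AddGroup G] [Fintype G]
    [AddGroup H] [Fintype H] [DecidableEq H] (f : G →+ H) (hf : Surjective f) (h : H) :
    #{x | f x = h} * Fintype.card H = Fintype.card G := by
  have hfib : ∀ h', #{x | f x = h'} = #{x | f x = h} := fun h' =>
    AddMonoidHom.card_fiber_eq_of_mem_range f (hf h') (hf h)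
  calc #{x | f x = h} * Fintype.card H = ∑ h' : H, #{x | f x = h'} := by simp [hfib, mul_comm]
    _ = Fintype.card G := (card_eq_sum_card_fiberwise fun x _ => mem_univ (f x)).symm

section Field

variable {K : Type*} [Field K] {n : ℕ}

lemma card_dotProduct_eq_mul_card [Fintype K] [DecidableEq K] {u : Fin n → K} (hu : u ≠ 0)
    (a : K) : #{v | u ⬝ᵥ v = a} * Fintype.card K = Fintype.card K ^ n := by
  obtain ⟨j, hj⟩ := Function.ne_iff.mp hu
  have hsurj : Surjective (dotProductBilin K K u) := fun a =>
    ⟨Pi.single j (a / u j), by simp [dotProductBilin, dotProduct_single, mul_div_cancel₀ _ hj]⟩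
  simpa [Fintype.card_fun] using
    (dotProductBilin K K u).toAddMonoidHom.card_fiber_mul_card_of_surjective hsurj a

lemma card_dotProduct_eq_and_dotProduct_eq_mul_card [Fintype K] [DecidableEq K]
    {u w : Fin n → K} (huw : LinearIndependent K ![u, w]) (a b : K) :
    #{v | u ⬝ᵥ v = a ∧ w ⬝ᵥ v = b} * Fintype.card K ^ 2 = Fintype.card K ^ n := by
  set M : Matrix (Fin 2) (Fin n) K := Matrix.of ![u, w]
  have hrank : M.rank = 2 := by simpa using huw.rank_matrix (M := M)
  have hsurj : Surjective M.mulVecLin := by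
    rw [← LinearMap.range_eq_top]
    apply Submodule.eq_top_of_finrank_eq
    simpa [Matrix.rank] using hrank
  convert M.mulVecLin.toAddMonoidHom.card_fiber_mul_card_of_surjective hsurj ![a, b] using 4
  · simp [M, funext_iff, Fin.forall_fin_two]
  · simp
  · simp

lemma LinearMap.apply_eq_dotProduct (φ : (Fin n → K) →ₗ[K] K) (x : Fin n → K) :
    φ x = (fun i => φ (Pi.single i 1)) ⬝ᵥ x := by
  conv_lhs => rw [← Finset.univ_sum_single x]
  simp only [map_sum, dotProduct]
  refine Finset.sum_congr rfl fun i _ => ?_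
  rw [mul_comm, ← smul_eq_mul, ← map_smul, ← Pi.single_smul', smul_eq_mul, mul_one]

lemma Submodule.exists_ne_zero_mem_iff_dotProduct_eq_zero (W : Submodule K (Fin n → K))
    (hW : Module.finrank K W + 1 = n) : ∃ c ≠ 0, ∀ x, x ∈ W ↔ c ⬝ᵥ x = 0 := by
  have hQ : Module.finrank K ((Fin n → K) ⧸ W) = Module.finrank K K := by
    have := W.finrank_quotient_add_finrank
    rw [Module.finrank_fin_fun] at this
    rw [Module.finrank_self]
    omega
  let φ := (LinearEquiv.ofFinrankEq _ _ hQ).toLinearMap ∘ₗ W.mkQ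
  have hker : ∀ x, x ∈ W ↔ φ x = 0 := fun x => by simp [φ, Submodule.Quotient.mk_eq_zero]
  refine ⟨fun i => φ (Pi.single i 1), fun hc => ?_, fun x => by rw [hker, φ.apply_eq_dotProduct]⟩
  have hWtop : W = ⊤ := by
    rw [Submodule.eq_top_iff']
    intro x
    rw [hker, φ.apply_eq_dotProduct, hc, zero_dotProduct]
  rw [hWtop, finrank_top, Module.finrank_fin_fun] at hW
  omega

end Field

lemma IsAffineOfDim.exists_eq_setOf_dotProduct_eq {n : ℕ} {A : Set (Fin n → ZMod 2)}
    (hA : IsAffineOfDim A (n - 1)) (hn : 0 < n) : ∃ c ≠ 0, ∃ b, A = {x | c ⬝ᵥ x = b} := by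
  obtain ⟨a, W, hW, rfl⟩ := hA
  obtain ⟨c, hc, hWc⟩ := W.exists_ne_zero_mem_iff_dotProduct_eq_zero (by omega)
  refine ⟨c, hc, c ⬝ᵥ a, ?_⟩
  ext x
  simp only [Set.image_add_left, Set.mem_preimage, SetLike.mem_coe, hWc, dotProduct_add,
    dotProduct_neg, neg_add_eq_zero, Set.mem_ofPred_eq, eq_comm]

lemma linearIndependent_pair_zmod_two {V : Type*} [AddCommGroup V] [Module (ZMod 2) V] {u w : V}
    (hu : u ≠ 0) (hw : w ≠ 0) (huw : u ≠ w) : LinearIndependent (ZMod 2) ![u, w] := by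
  rw [LinearIndependent.pair_iff]
  have hcases : ∀ s : ZMod 2, s = 0 ∨ s = 1 := by decide
  intro s t hst
  rcases hcases s with rfl | rfl <;> rcases hcases t with rfl | rfl <;>
    simp_all [add_eq_zero_iff_eq_neg, ZModModule.neg_eq_self]

section ZModTwo

variable {k : ℕ}

lemma card_dotProduct_eq_and_dotProduct_eq_mul_four_le {u w : Fin k → ZMod 2} (hu : u ≠ 0)
    (hw : w ≠ 0) (s c : ZMod 2) :
    #{v | u ⬝ᵥ v = s ∧ w ⬝ᵥ v = c} * 4 ≤ 2 ^ k + if u = w then 2 ^ k else 0 := by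
  by_cases huw : u = w
  · have hcard := card_dotProduct_eq_mul_card hu s
    have hsub : #{v | u ⬝ᵥ v = s ∧ w ⬝ᵥ v = c} ≤ #{v | u ⬝ᵥ v = s} :=
      card_le_card (monotone_filter_right _ fun _ _ h => h.1)
    simp only [ZMod.card] at hcard
    rw [if_pos huw]
    omega
  · have hcard := card_dotProduct_eq_and_dotProduct_eq_mul_card
      (linearIndependent_pair_zmod_two hu hw huw) s c
    simp only [ZMod.card] at hcard
    rw [if_neg huw]
    omega

lemma card_zero_dotProduct_eq_and_dotProduct_eq_mul_four_le {w : Fin k → ZMod 2} (hw : w ≠ 0)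
    (s c : ZMod 2) :
    #{v | (0 : Fin k → ZMod 2) ⬝ᵥ v = s ∧ w ⬝ᵥ v = c} * 4 ≤ if s = 0 then 2 * 2 ^ k else 0 := by
  have hcard := card_dotProduct_eq_mul_card hw c
  simp only [ZMod.card] at hcard
  split_ifs with hs
  · simp only [zero_dotProduct, hs, true_and]
    omega
  · simp [zero_dotProduct, Ne.symm hs]

lemma card_dotProduct_eq_and_add_dotProduct_eq_mul_four_le_of_right_ne_zero
    {α β : Fin k → ZMod 2} (hβ : β ≠ 0) (s b : ZMod 2) :
    #{p : (Fin k → ZMod 2) × (Fin k → ZMod 2) | p.1 ⬝ᵥ p.2 = s ∧ α ⬝ᵥ p.1 + β ⬝ᵥ p.2 = b} * 4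
      ≤ 2 ^ k * 2 ^ k + if s = 0 then 2 * 2 ^ k else 0 := by
  set g : (Fin k → ZMod 2) → ℕ := fun u => #{v | u ⬝ᵥ v = s ∧ β ⬝ᵥ v = b - α ⬝ᵥ u}
  have hslices : #{p : (Fin k → ZMod 2) × (Fin k → ZMod 2) |
      p.1 ⬝ᵥ p.2 = s ∧ α ⬝ᵥ p.1 + β ⬝ᵥ p.2 = b} = ∑ u, g u := by
    simp only [g, card_filter, Fintype.sum_prod_type, eq_sub_iff_add_eq']
  -- The `2 ^ k` added at `u = 0` makes the bound uniform in `u`; it cancels after summing.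
  have hbound : ∀ u, g u * 4 + (if u = 0 then 2 ^ k else 0) ≤
      2 ^ k + (if u = β then 2 ^ k else 0) +
        if u = 0 then (if s = 0 then 2 * 2 ^ k else 0) else 0 := by
    intro u
    by_cases hu : u = 0
    · subst hu
      have := card_zero_dotProduct_eq_and_dotProduct_eq_mul_four_le hβ s (b - α ⬝ᵥ 0)
      simp only [g, ↓reduceIte, if_neg (Ne.symm hβ)]
      omega
    · have := card_dotProduct_eq_and_dotProduct_eq_mul_four_le hu hβ s (b - α ⬝ᵥ u)
      simp only [if_neg hu]
      omega
  have hsum := sum_le_sum fun u (_ : u ∈ univ) => hbound u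
  simp only [sum_add_distrib, sum_ite_eq', mem_univ, if_true, sum_const, card_univ,
    Fintype.card_fun, ZMod.card, Fintype.card_fin, smul_eq_mul, ← sum_mul] at hsum
  rw [hslices]
  omega

lemma card_dotProduct_eq_and_add_dotProduct_eq_mul_four_le {α β : Fin k → ZMod 2}
    (hαβ : (α, β) ≠ 0) (s b : ZMod 2) :
    #{p : (Fin k → ZMod 2) × (Fin k → ZMod 2) | p.1 ⬝ᵥ p.2 = s ∧ α ⬝ᵥ p.1 + β ⬝ᵥ p.2 = b} * 4
      ≤ 2 ^ k * 2 ^ k + if s = 0 then 2 * 2 ^ k else 0 := by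
  by_cases hβ : β = 0
  · have hα : α ≠ 0 := fun hα => hαβ (Prod.ext hα hβ)
    rw [card_equiv (Equiv.prodComm _ _) (t := {p | p.1 ⬝ᵥ p.2 = s ∧ β ⬝ᵥ p.1 + α ⬝ᵥ p.2 = b})
      fun p => by simp [hβ, dotProduct_comm p.1]]
    exact card_dotProduct_eq_and_add_dotProduct_eq_mul_four_le_of_right_ne_zero hα s b
  · exact card_dotProduct_eq_and_add_dotProduct_eq_mul_four_le_of_right_ne_zero hβ s b

/-- `x ↦ (x_{1..k}, x_{k+1..2k})`. -/
def halves (k : ℕ) {R : Type*} : (Fin (2 * k) → R) ≃ (Fin k → R) × (Fin k → R) :=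
  ((finSumFinEquiv.trans (finCongr (two_mul k).symm)).arrowCongr (Equiv.refl R)).symm.trans
    (Equiv.sumArrowEquivProdArrow _ _ _)

lemma qForm_eq_dotProduct_halves (x : Fin (2 * k) → ZMod 2) :
    qForm k x = (halves k x).1 ⬝ᵥ (halves k x).2 := rfl

lemma dotProduct_eq_dotProduct_halves_add {R : Type*} [CommSemiring R] (c x : Fin (2 * k) → R) :
    c ⬝ᵥ x = (halves k c).1 ⬝ᵥ (halves k x).1 + (halves k c).2 ⬝ᵥ (halves k x).2 := by
  rw [dotProduct, ← (finSumFinEquiv.trans (finCongr (two_mul k).symm)).sum_comp,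
    Fintype.sum_sum_type]
  rfl

lemma ncard_setOf_dotProduct_eq_inter_setOf_qForm_eq_mul_four_le {c : Fin (2 * k) → ZMod 2}
    (hc : c ≠ 0) (b s : ZMod 2) :
    ({x | c ⬝ᵥ x = b} ∩ {x | qForm k x = s}).ncard * 4
      ≤ 2 ^ k * 2 ^ k + if s = 0 then 2 * 2 ^ k else 0 := by
  have hcard : ({x | c ⬝ᵥ x = b} ∩ {x | qForm k x = s}).ncard
      = #{p : (Fin k → ZMod 2) × (Fin k → ZMod 2) |
          p.1 ⬝ᵥ p.2 = s ∧ (halves k c).1 ⬝ᵥ p.1 + (halves k c).2 ⬝ᵥ p.2 = b} := by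
    rw [← Set.ncard_coe_finset]
    refine Set.ncard_congr (fun x _ => halves k x) ?_ (fun _ _ _ _ h => (halves k).injective h) ?_
    · intro x hx
      simpa [← qForm_eq_dotProduct_halves, ← dotProduct_eq_dotProduct_halves_add, and_comm] using hx
    · intro p hp
      refine ⟨(halves k).symm p, ?_, by simp⟩
      simpa [qForm_eq_dotProduct_halves, dotProduct_eq_dotProduct_halves_add c, and_comm] using hp
  rw [hcard]
  refine card_dotProduct_eq_and_add_dotProduct_eq_mul_four_le ?_ s b
  rw [Prod.mk.eta]
  exact (halves k).injective.ne hc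

end ZModTwo

theorem stmt_2 (k : ℕ) (hk : 0 < k)
    (A : Set (Fin (2 * k) → ZMod 2)) (hA : IsAffineOfDim A (2 * k - 1)) :
    (A ∩ Rset k).ncard ≤ 2 ^ (2 * k - 2) + 2 ^ (k - 1) ∧
    (A ∩ Sset k).ncard ≤ 2 ^ (2 * k - 2) := by
  obtain ⟨c, hc, b, rfl⟩ := hA.exists_eq_setOf_dotProduct_eq (by omega)
  have hR := ncard_setOf_dotProduct_eq_inter_setOf_qForm_eq_mul_four_le hc b 0
  have hS := ncard_setOf_dotProduct_eq_inter_setOf_qForm_eq_mul_four_le hc b 1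
  simp only [↓reduceIte, one_ne_zero, add_zero] at hR hS
  have h4 : 2 ^ k * 2 ^ k = 4 * 2 ^ (2 * k - 2) := by
    rw [← pow_add, show 4 = 2 ^ 2 by rfl, ← pow_add]
    congr 1
    omega
  have h2 : 2 ^ k = 2 * 2 ^ (k - 1) := by
    rw [← pow_succ']
    congr 1
    omega
  unfold Rset Sset
  omega
end

section
/- Let k and d be positive integers with k ≤ d < 2k-1, and let A be a d-dimensional affine subspace of 𝔽₂^{2k}. Then |A ∩ R_k| ≤ 2^{d-1} + 2^{k-1} and |A ∩ S_k| ≤ 2^{d-1} + 2^{k-2}. -/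
open Finset Matrix
open LinearMap (BilinForm)

def signChar : AddChar (ZMod 2) ℤ := AddChar.zmodChar 2 (by norm_num : (-1 : ℤ) ^ 2 = 1)

lemma signChar_eq_one_iff (a : ZMod 2) : signChar a = 1 ↔ a = 0 := by revert a; decide

lemma signChar_le_one (a : ZMod 2) : signChar a ≤ 1 := by revert a; decide

section Counting
variable {X : Type*} [Fintype X]

lemma sum_signChar_eq_card_sub_card (f : X → ZMod 2) :
    ∑ x, signChar (f x) = (#{x | f x = 0} : ℤ) - #{x | f x = 1} := by
  have (x : X) : signChar (f x) = (if f x = 0 then 1 else 0) - (if f x = 1 then 1 else 0) := by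
    generalize f x = a; revert a; decide
  simp only [this, sum_sub_distrib, sum_boole]

lemma card_filter_eq_zero_add_card_filter_eq_one (f : X → ZMod 2) :
    #{x | f x = 0} + #{x | f x = 1} = Fintype.card X := by
  rw [← card_univ, ← card_filter_add_card_filter_not (s := univ) (fun x ↦ f x = 0)]
  congr 2
  ext x
  simp only [mem_filter, mem_univ, true_and]
  generalize f x = a; revert a; decide

end Counting

section AddCommGroup
variable {G : Type*} [AddCommGroup G] [Fintype G]

lemma sum_signChar_eq_ite (f : G → ZMod 2) (hf : ∀ x y, f (x + y) = f x + f y) :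
    ∑ x, signChar (f x) = if ∀ x, f x = 0 then (Fintype.card G : ℤ) else 0 := by
  have := AddChar.sum_eq_ite (signChar.compAddMonoidHom (AddMonoidHom.mk' f hf))
  simp only [AddChar.compAddMonoidHom_apply, AddChar.eq_zero_iff, signChar_eq_one_iff,
    AddMonoidHom.mk'_apply] at this
  convert this

lemma sum_signChar_add_right (f : G → ZMod 2) (c : G) :
    ∑ x, signChar (f (x + c)) = ∑ x, signChar (f x) :=
  Fintype.sum_equiv (Equiv.addRight c) _ _ fun _ ↦ rfl

end AddCommGroup

section QuadraticFunction
variable {V : Type*} [AddCommGroup V] [Module (ZMod 2) V] {f : V → ZMod 2}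
  {β : BilinForm (ZMod 2) V}

lemma polar_comm (hf : ∀ x y, f (x + y) = f x + f y + β x y) (x y : V) : β x y = β y x := by
  have := hf x y
  rw [add_comm x y, hf y x] at this
  linear_combination -this

lemma isRefl_of_polar (hf : ∀ x y, f (x + y) = f x + f y + β x y) : β.IsRefl :=
  fun x y h ↦ by rw [polar_comm hf, h]

variable [Fintype V]

lemma neg_card_le_two_mul_sum_signChar {g : V → ZMod 2} {γ : BilinForm (ZMod 2) V}
    (hg : ∀ x y, g (x + y) = g x + g y + γ x y) :
    -(Fintype.card V : ℤ) ≤ 2 * ∑ x, signChar (g x) := by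
  by_cases hγ : ∀ x y, γ x y = 0
  · have : 0 ≤ ∑ x, signChar (g x) := by
      rw [sum_signChar_eq_ite g fun x y ↦ by rw [hg, hγ, add_zero]]
      split_ifs <;> positivity
    linarith
  obtain ⟨ξ, η, hξη⟩ : ∃ ξ η, γ ξ η ≠ 0 := by simpa using hγ
  -- as `γ ξ η = 1`, the four terms are `ε, εs, εt, -εst` for signs `ε, s, t`: their sum is `±2`
  have four_le (x : V) : -2 ≤ signChar (g x) + signChar (g (x + ξ)) + signChar (g (x + η)) +
      signChar (g (x + (ξ + η))) := by
    rw [hg x ξ, hg x η, hg x (ξ + η), hg ξ η, (γ x).map_add, Fin.eq_one_of_ne_zero _ hξη]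
    generalize g x = p, g ξ = s, g η = t, γ x ξ = u, γ x η = v
    revert p s t u v; decide
  have := sum_le_sum fun x (_ : x ∈ univ) ↦ four_le x
  simp only [sum_add_distrib, sum_signChar_add_right, sum_const, card_univ, nsmul_eq_mul] at this
  linarith

open scoped Classical

lemma sum_signChar_orthogonal {B : BilinForm (ZMod 2) V} (hB : B.Nondegenerate) (hB' : B.IsRefl)
    (W : Submodule (ZMod 2) V) (y : V) :
    ∑ ξ : B.orthogonal W, signChar (B ξ y) =
      if y ∈ W then (Fintype.card (B.orthogonal W) : ℤ) else 0 := by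
  rw [sum_signChar_eq_ite _ fun ξ η ↦ by simp]
  congr 1
  conv_rhs => rw [← B.orthogonal_orthogonal hB hB' W]
  simp

lemma sum_signChar_add_polar (hf : ∀ x y, f (x + y) = f x + f y + β x y) (c : V) :
    ∑ x, signChar (f x + β c x) = signChar (f c) * ∑ x, signChar (f x) := by
  have (x : V) : f x + β c x = f (x + c) + f c := by
    rw [hf x c, polar_comm hf x c]
    grind
  simp_rw [this, AddChar.map_add_eq_mul, ← sum_mul, sum_signChar_add_right, mul_comm]

lemma card_orthogonal_mul_sum_signChar_coset (hf : ∀ x y, f (x + y) = f x + f y + β x y)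
    (hβ : β.Nondegenerate) (a : V) (W : Submodule (ZMod 2) V) :
    (Fintype.card (β.orthogonal W) : ℤ) * ∑ w : W, signChar (f (a + w)) =
      (∑ x, signChar (f x)) * ∑ ξ : β.orthogonal W, signChar (f ξ + β a ξ) := by
  calc _ = ∑ y, (if y ∈ W then (Fintype.card (β.orthogonal W) : ℤ) else 0) *
          signChar (f (a + y)) := by
        rw [mul_sum, ← sum_subtype ({y | y ∈ W} : Finset V) (by simp)
          (fun y ↦ (Fintype.card (β.orthogonal W) : ℤ) * signChar (f (a + y))), sum_filter]
        simp_rw [ite_mul, zero_mul]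
    _ = ∑ ξ : β.orthogonal W, ∑ y, signChar (f a) * signChar (f y + β (a + ξ) y) := by
        simp_rw [← sum_signChar_orthogonal hβ (isRefl_of_polar hf), sum_mul]
        rw [sum_comm]
        refine sum_congr rfl fun ξ _ ↦ sum_congr rfl fun y _ ↦ ?_
        rw [← AddChar.map_add_eq_mul, ← AddChar.map_add_eq_mul, hf, β.map_add₂]
        ring_nf
    _ = ∑ ξ : β.orthogonal W,
          signChar (f a) * signChar (f (a + ξ)) * ∑ x, signChar (f x) := by
        refine sum_congr rfl fun ξ _ ↦ ?_
        rw [← mul_sum, sum_signChar_add_polar hf, mul_assoc]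
    _ = _ := by
        rw [mul_sum]
        refine sum_congr rfl fun ξ _ ↦ ?_
        rw [← AddChar.map_add_eq_mul, hf, mul_comm]
        congr 2
        grind

lemma sum_signChar_coset_bounds (hf : ∀ x y, f (x + y) = f x + f y + β x y)
    (hβ : β.Nondegenerate) (hG : 0 ≤ ∑ x, signChar (f x)) (a : V) (W : Submodule (ZMod 2) V) :
    -∑ x, signChar (f x) ≤ 2 * ∑ w : W, signChar (f (a + w)) ∧
      ∑ w : W, signChar (f (a + w)) ≤ ∑ x, signChar (f x) := by
  set U := β.orthogonal W
  have hfourier := card_orthogonal_mul_sum_signChar_coset hf hβ a W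
  have hU : (0 : ℤ) < Fintype.card U := by exact_mod_cast Fintype.card_pos
  have hlow : -(Fintype.card U : ℤ) ≤ 2 * ∑ ξ : U, signChar (f ξ + β a ξ) :=
    neg_card_le_two_mul_sum_signChar (γ := β.restrict U) fun ξ η ↦ by
      simp only [Submodule.coe_add, hf, map_add, BilinForm.restrict_apply,
        LinearMap.domRestrict_apply]
      ring
  have hhigh : ∑ ξ : U, signChar (f ξ + β a ξ) ≤ Fintype.card U := by
    calc _ ≤ ∑ _ξ : U, (1 : ℤ) := sum_le_sum fun ξ _ ↦ signChar_le_one _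
      _ = Fintype.card U := by simp
  constructor
  · nlinarith
  · nlinarith

lemma ncard_coset_inter_fiber (a : V) (W : Submodule (ZMod 2) V) (g : V → ZMod 2) (c : ZMod 2) :
    ((a + ·) '' (W : Set V) ∩ {x | g x = c}).ncard = #{w : W | g (a + w) = c} := by
  have : (a + ·) '' (W : Set V) ∩ {x | g x = c} =
      (fun w : W ↦ a + (w : V)) '' ↑({w : W | g (a + w) = c} : Finset W) := by
    ext x
    aesop
  rw [this, Set.ncard_image_of_injective _ fun w w' h ↦ Subtype.ext (add_left_cancel h),
    Set.ncard_coe_finset]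

end QuadraticFunction

def splitEquiv (k : ℕ) :
    (Fin (2 * k) → ZMod 2) ≃ₗ[ZMod 2] (Fin k → ZMod 2) × (Fin k → ZMod 2) :=
  (LinearEquiv.funCongrLeft (ZMod 2) (ZMod 2)
    (finSumFinEquiv.trans (finCongr (two_mul k).symm))).trans
    (LinearEquiv.sumArrowLequivProdArrow _ _ _ _)

lemma qForm_eq_dotProduct (k : ℕ) (x : Fin (2 * k) → ZMod 2) :
    qForm k x = (splitEquiv k x).1 ⬝ᵥ (splitEquiv k x).2 := rfl

def bForm (k : ℕ) : BilinForm (ZMod 2) (Fin (2 * k) → ZMod 2) :=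
  let π₁ := LinearMap.fst (ZMod 2) _ _ ∘ₗ (splitEquiv k).toLinearMap
  let π₂ := LinearMap.snd (ZMod 2) _ _ ∘ₗ (splitEquiv k).toLinearMap
  (dotProductBilin (ZMod 2) (ZMod 2)).compl₁₂ π₁ π₂ +
    (dotProductBilin (ZMod 2) (ZMod 2)).compl₁₂ π₂ π₁

lemma bForm_apply (k : ℕ) (x y : Fin (2 * k) → ZMod 2) :
    bForm k x y =
      (splitEquiv k x).1 ⬝ᵥ (splitEquiv k y).2 + (splitEquiv k x).2 ⬝ᵥ (splitEquiv k y).1 :=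
  rfl

lemma qForm_add (k : ℕ) (x y : Fin (2 * k) → ZMod 2) :
    qForm k (x + y) = qForm k x + qForm k y + bForm k x y := by
  simp only [qForm_eq_dotProduct, bForm_apply, map_add, Prod.fst_add, Prod.snd_add,
    add_dotProduct, dotProduct_add, dotProduct_comm (splitEquiv k y).1]
  ring

lemma bForm_nondegenerate (k : ℕ) : (bForm k).Nondegenerate := by
  refine (isRefl_of_polar (qForm_add k)).nondegenerate_iff_separatingLeft.2 fun x hx ↦ ?_
  obtain ⟨⟨u, v⟩, rfl⟩ := (splitEquiv k).symm.surjective x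
  have hu : u = 0 := dotProduct_eq_zero_iff.1 fun w ↦ by
    simpa [bForm_apply] using hx ((splitEquiv k).symm (0, w))
  have hv : v = 0 := dotProduct_eq_zero_iff.1 fun w ↦ by
    simpa [bForm_apply] using hx ((splitEquiv k).symm (w, 0))
  simp [hu, hv]

lemma sum_signChar_qForm (k : ℕ) : ∑ x, signChar (qForm k x) = 2 ^ k := by
  rw [← (splitEquiv k).symm.toEquiv.sum_comp, Fintype.sum_prod_type]
  simp only [LinearEquiv.coe_toEquiv, qForm_eq_dotProduct, LinearEquiv.apply_symm_apply]
  simp_rw [sum_signChar_eq_ite _ (dotProduct_add _), dotProduct_eq_zero_iff]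
  simp [ZMod.card]

theorem stmt_3_general (k d : ℕ) (A : Set (Fin (2 * k) → ZMod 2)) (hA : IsAffineOfDim A d) :
    ((A ∩ Rset k).ncard : ℝ) ≤ 2 ^ ((d : ℤ) - 1) + 2 ^ ((k : ℤ) - 1) ∧
    ((A ∩ Sset k).ncard : ℝ) ≤ 2 ^ ((d : ℤ) - 1) + 2 ^ ((k : ℤ) - 2) := by
  classical
  obtain ⟨a, W, hW, rfl⟩ := hA
  set N₀ := #{w : W | qForm k (a + w) = 0}
  set N₁ := #{w : W | qForm k (a + w) = 1}
  have hcard : Fintype.card W = 2 ^ d := by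
    rw [Module.card_eq_pow_finrank (K := ZMod 2), ZMod.card, hW]
  have hsum : (N₀ + N₁ : ℝ) = 2 ^ d := by
    exact_mod_cast (card_filter_eq_zero_add_card_filter_eq_one _).trans hcard
  obtain ⟨hlow, hhigh⟩ := sum_signChar_coset_bounds (qForm_add k) (bForm_nondegenerate k)
    (by rw [sum_signChar_qForm]; positivity) a W
  rw [sum_signChar_qForm, sum_signChar_eq_card_sub_card] at hlow hhigh
  have hlow' : -(2 : ℝ) ^ k ≤ 2 * (N₀ - N₁) := by exact_mod_cast hlow
  have hhigh' : (N₀ - N₁ : ℝ) ≤ 2 ^ k := by exact_mod_cast hhigh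
  rw [Rset, Sset, ncard_coset_inter_fiber, ncard_coset_inter_fiber]
  simp only [zpow_sub₀ (two_ne_zero' ℝ), zpow_natCast]
  norm_num
  constructor <;> linarith

theorem stmt_3 (k d : ℕ) (hk : 0 < k) (hd : 0 < d)
    (hkd : k ≤ d) (hd2 : d < 2 * k - 1)
    (A : Set (Fin (2 * k) → ZMod 2)) (hA : IsAffineOfDim A d) :
    ((A ∩ Rset k).ncard : ℝ) ≤ 2 ^ ((d : ℤ) - 1) + 2 ^ ((k : ℤ) - 1) ∧
    ((A ∩ Sset k).ncard : ℝ) ≤ 2 ^ ((d : ℤ) - 1) + 2 ^ ((k : ℤ) - 2) :=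
  stmt_3_general k d A hA
end

section
/- Let k be a positive integer, a₁, a₂ ∈ 𝔽₂^{2k}, and W a linear subspace of 𝔽₂^{2k}. For the affine subspaces A₁ = a₁ + W and A₂ = a₂ + W there exist two sets B₁ and B₂, each of which is either empty or an affine subspace of 𝔽₂^{2k}, such that |A₁ ∩ R_k| + |A₂ ∩ S_k| = |B₁| + 2·|B₂ ∩ S_k| and |B₁| + |B₂| = |W|. -/
/-- `A` is an affine subspace: a translate `a + W` of a linear subspace `W`. -/
def IsAffineSubspace {V : Type*} [AddCommGroup V] [Module (ZMod 2) V]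
    (A : Set V) : Prop :=
  ∃ (a : V) (W : Submodule (ZMod 2) V), A = (a + ·) '' (W : Set V)

/-!
Put `d = a₂ - a₁` and `A = a₁ + W`, so that `a₂ + W = A + d`. Since `q` is quadratic,
`x ↦ q (x + d) - q x` is affine on `A`, hence `A` splits into the two fibres
`E ε = {x ∈ A | q (x + d) = q x + ε}`, each empty or a coset of `W ∩ ker (polar q · d)`.
A point of `E 0` is counted exactly once on the left, and a point `x ∈ E 1` twice if
`q (x + d) = 1` and not at all otherwise; so `B₁ = E 0` and `B₂ = E 1 + d` work.
-/

open QuadraticMap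

def qQuadraticForm (k : ℕ) : QuadraticForm (ZMod 2) (Fin (2 * k) → ZMod 2) :=
  ∑ i : Fin k, proj ⟨i.1, by omega⟩ ⟨k + i.1, by omega⟩

theorem coe_qQuadraticForm (k : ℕ) : ⇑(qQuadraticForm k) = qForm k := by
  ext x
  simp [qQuadraticForm, qForm]

theorem Set.ncard_inter_setOf_eq_sum {α : Type*} {A : Set α} (hA : A.Finite) (p : α → Prop)
    [DecidablePred p] : (A ∩ {x | p x}).ncard = ∑ x ∈ hA.toFinset, if p x then 1 else 0 := by
  rw [Set.ncard_eq_toFinset_card _ (hA.inter_of_left _), ← Finset.card_filter]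
  congr 1
  ext x
  simp

section Counting

variable {V : Type*} [AddCommGroup V]

def shiftFiber (q : V → ZMod 2) (d : V) (A : Set V) (ε : ZMod 2) : Set V :=
  A ∩ {x | q (x + d) = q x + ε}

theorem ncard_image_add_right_inter (d : V) (A T : Set V) :
    ((· + d) '' A ∩ T).ncard = (A ∩ {x | x + d ∈ T}).ncard := by
  rw [← Set.image_inter_preimage, Set.ncard_image_of_injective _ (add_left_injective d)]
  rfl

theorem ncard_shiftFiber_zero_add_ncard_shiftFiber_one (q : V → ZMod 2) (d : V) {A : Set V}
    (hA : A.Finite) :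
    (shiftFiber q d A 0).ncard + (shiftFiber q d A 1).ncard = A.ncard := by
  classical
  rw [shiftFiber, shiftFiber, Set.ncard_inter_setOf_eq_sum hA, Set.ncard_inter_setOf_eq_sum hA,
    ← Finset.sum_add_distrib, Set.ncard_eq_toFinset_card A hA, Finset.card_eq_sum_ones]
  refine Finset.sum_congr rfl fun x _ => ?_
  generalize q x = u
  generalize q (x + d) = v
  revert u v
  decide

theorem ncard_inter_zero_add_ncard_image_add_right_inter_one (q : V → ZMod 2) (d : V)
    {A : Set V} (hA : A.Finite) :
    (A ∩ {x | q x = 0}).ncard + ((· + d) '' A ∩ {x | q x = 1}).ncard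
      = (shiftFiber q d A 0).ncard
        + 2 * ((· + d) '' shiftFiber q d A 1 ∩ {x | q x = 1}).ncard := by
  classical
  rw [ncard_image_add_right_inter, ncard_image_add_right_inter, shiftFiber, shiftFiber,
    Set.inter_assoc, ← Set.ofPred_and]
  simp only [Set.mem_ofPred_eq, Set.ncard_inter_setOf_eq_sum hA, Finset.mul_sum,
    ← Finset.sum_add_distrib]
  refine Finset.sum_congr rfl fun x _ => ?_
  generalize q x = u
  generalize q (x + d) = v
  revert u v
  decide

end Counting

section Affine

variable {V : Type*} [AddCommGroup V] [Module (ZMod 2) V]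

theorem IsAffineSubspace.image_add_right {A : Set V} (hA : IsAffineSubspace A) (d : V) :
    IsAffineSubspace ((· + d) '' A) := by
  obtain ⟨a, W, rfl⟩ := hA
  refine ⟨a + d, W, ?_⟩
  rw [Set.image_image]
  congr with w
  abel

theorem image_add_inter_preimage_eq_empty_or_isAffineSubspace {M : Type*} [AddCommGroup M]
    [Module (ZMod 2) M] (a : V) (W : Submodule (ZMod 2) V) (φ : V →ₗ[ZMod 2] M) (c : M) :
    (a + ·) '' (W : Set V) ∩ φ ⁻¹' {c} = ∅ ∨
      IsAffineSubspace ((a + ·) '' (W : Set V) ∩ φ ⁻¹' {c}) := by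
  rcases Set.eq_empty_or_nonempty ((a + ·) '' (W : Set V) ∩ φ ⁻¹' {c})
    with h | ⟨_, ⟨w₀, hw₀, rfl⟩, hc⟩
  · exact Or.inl h
  refine Or.inr ⟨a + w₀, W ⊓ LinearMap.ker φ, ?_⟩
  ext x
  constructor
  · rintro ⟨⟨w, hw, rfl⟩, hx⟩
    have hφ : φ (a + w) = φ (a + w₀) := hx.trans hc.symm
    refine ⟨w - w₀, ⟨W.sub_mem hw hw₀, ?_⟩, add_add_sub_cancel a w w₀⟩
    simpa [sub_eq_zero] using hφ
  · rintro ⟨v, ⟨hvW, hv⟩, rfl⟩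
    refine ⟨⟨w₀ + v, W.add_mem hw₀ hvW, (add_assoc a w₀ v).symm⟩, ?_⟩
    simpa [← add_assoc, LinearMap.mem_ker.mp hv] using hc

theorem shiftFiber_eq_inter_preimage (Q : QuadraticForm (ZMod 2) V) (d : V) (A : Set V)
    (ε : ZMod 2) : shiftFiber Q d A ε = A ∩ (polarBilin Q).flip d ⁻¹' {ε - Q d} := by
  ext x
  simp only [shiftFiber, Set.mem_inter_iff, Set.mem_ofPred_eq, Set.mem_preimage,
    Set.mem_singleton_iff, LinearMap.flip_apply, polarBilin_apply_apply, polar]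
  exact and_congr_right fun _ =>
    ⟨fun h => by linear_combination h, fun h => by linear_combination h⟩

theorem shiftFiber_eq_empty_or_isAffineSubspace (Q : QuadraticForm (ZMod 2) V) (d a : V)
    (W : Submodule (ZMod 2) V) (ε : ZMod 2) :
    shiftFiber Q d ((a + ·) '' (W : Set V)) ε = ∅ ∨
      IsAffineSubspace (shiftFiber Q d ((a + ·) '' (W : Set V)) ε) := by
  rw [shiftFiber_eq_inter_preimage]
  exact image_add_inter_preimage_eq_empty_or_isAffineSubspace a W _ _

end Affine

theorem stmt_5_general (k : ℕ) (a₁ a₂ : Fin (2 * k) → ZMod 2)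
    (W : Submodule (ZMod 2) (Fin (2 * k) → ZMod 2)) :
    ∃ B₁ B₂ : Set (Fin (2 * k) → ZMod 2),
      (B₁ = ∅ ∨ IsAffineSubspace B₁) ∧
      (B₂ = ∅ ∨ IsAffineSubspace B₂) ∧
      ((a₁ + ·) '' (W : Set _) ∩ Rset k).ncard
          + ((a₂ + ·) '' (W : Set _) ∩ Sset k).ncard
        = B₁.ncard + 2 * (B₂ ∩ Sset k).ncard ∧
      B₁.ncard + B₂.ncard = (W : Set (Fin (2 * k) → ZMod 2)).ncard := by
  set d := a₂ - a₁
  set A := (a₁ + ·) '' (W : Set (Fin (2 * k) → ZMod 2))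
  have hA₂ : (a₂ + ·) '' (W : Set (Fin (2 * k) → ZMod 2)) = (· + d) '' A := by
    rw [Set.image_image]
    congr 1
    funext w
    show a₂ + w = a₁ + w + (a₂ - a₁)
    abel
  have hfiber (ε : ZMod 2) :
      shiftFiber (qForm k) d A ε = ∅ ∨ IsAffineSubspace (shiftFiber (qForm k) d A ε) := by
    rw [← coe_qQuadraticForm]
    exact shiftFiber_eq_empty_or_isAffineSubspace _ _ _ _ _
  refine ⟨shiftFiber (qForm k) d A 0, (· + d) '' shiftFiber (qForm k) d A 1, hfiber 0,
    ?_, ?_, ?_⟩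
  · rcases hfiber 1 with h | h
    · exact Or.inl (by rw [h, Set.image_empty])
    · exact Or.inr (h.image_add_right d)
  · rw [hA₂]
    exact ncard_inter_zero_add_ncard_image_add_right_inter_one _ d A.toFinite
  · rw [Set.ncard_image_of_injective _ (add_left_injective d),
      ncard_shiftFiber_zero_add_ncard_shiftFiber_one _ _ A.toFinite,
      Set.ncard_image_of_injective _ (add_right_injective a₁)]

theorem stmt_5 (k : ℕ) (hk : 0 < k) (a₁ a₂ : Fin (2 * k) → ZMod 2)
    (W : Submodule (ZMod 2) (Fin (2 * k) → ZMod 2)) :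
    ∃ B₁ B₂ : Set (Fin (2 * k) → ZMod 2),
      (B₁ = ∅ ∨ IsAffineSubspace B₁) ∧
      (B₂ = ∅ ∨ IsAffineSubspace B₂) ∧
      ((a₁ + ·) '' (W : Set _) ∩ Rset k).ncard
          + ((a₂ + ·) '' (W : Set _) ∩ Sset k).ncard
        = B₁.ncard + 2 * (B₂ ∩ Sset k).ncard ∧
      B₁.ncard + B₂.ncard = (W : Set (Fin (2 * k) → ZMod 2)).ncard :=
  stmt_5_general k a₁ a₂ W
end
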